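/- arXiv:1202.0343 — 2 statements merged into one kernel-verified Lean document; each statement's English description precedes it below -/
import Mathlib

section
/- Let w, r be positive integers and n = wr. Let T be the n×n block matrix [T_{i,j}] with 1 ≤ i,j ≤ w, where each block T_{i,j} is r×r, T_{i,j} has all entries independent and uniform over F₂ whenever j ≤ i, and T_{i,j} = 0 whenever i < j. Then for every integer 0 ≤ γ ≤ n−1, Pr[rank(T) < n−γ] ≤ ⌈(n−γ)/r⌉ · (1 − 2^{−r}) · 2^{−γ}. -/
open MeasureTheory ProbabilityTheory

noncomputable instance : MeasurableSpace (ZMod 2) := ⊤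

/-!
Call a column redundant when it lies in the span of the columns to its right; the rank is the
number of columns minus the number of redundant ones. If `rank T < n - γ`, some column `t` is
redundant with exactly `γ` redundant columns to its right, so those columns span a space of
dimension `n - 1 - t - γ`. Given all other columns, column `t` is uniform on the `n - r⌊t/r⌋`
entries the block pattern allows, so it lies in that span with probability at most
`2^{-(γ + t mod r + 1)}`. Summing over `t < n - γ` gives `2^{-γ}` times `⌈(n - γ)/r⌉` copies
of `∑_{k<r} 2^{-(k+1)} = 1 - 2^{-r}`.
-/

open Finset Module Submodule

theorem Finset.exists_card_filter_lt_eq {α : Type*} [LinearOrder α] {F : Finset α} {γ : ℕ}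
    (hγ : γ < #F) : ∃ t ∈ F, #{s ∈ F | t < s} = γ := by
  set g : α → ℕ := fun t => #{s ∈ F | t < s}
  have hanti : StrictAntiOn g F := by
    intro a _ b hb hab
    refine card_lt_card ((ssubset_iff_of_subset fun s hs => ?_).2 ⟨b, ?_, ?_⟩)
    · simp only [mem_filter] at hs ⊢
      exact ⟨hs.1, hab.trans hs.2⟩
    · simp [mem_coe.1 hb, hab]
    · simp
  have himage : F.image g = range #F := by
    refine eq_of_subset_of_card_le (fun n hn => ?_) ?_
    · obtain ⟨t, ht, rfl⟩ := mem_image.1 hn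
      exact mem_range.2 (card_lt_card (filter_ssubset.2 ⟨t, ht, lt_irrefl t⟩))
    · rw [card_range, card_image_of_injOn hanti.injOn]
  obtain ⟨t, ht, hγt⟩ := mem_image.1 (himage ▸ mem_range.2 hγ)
  exact ⟨t, ht, hγt⟩

section RedundantIndices

variable (K : Type*) {V ι : Type*} [Field K] [AddCommGroup V] [Module K V]

theorem finrank_span_insert_of_notMem_span {x : V} {s : Set V} (hs : s.Finite)
    (hx : x ∉ span K s) : finrank K (span K (insert x s)) = finrank K (span K s) + 1 := by
  have := FiniteDimensional.span_of_finite K hs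
  have hx0 : x ≠ 0 := fun h => hx (h ▸ zero_mem _)
  have hdisj : (K ∙ x) ⊓ span K s = ⊥ := ((disjoint_span_singleton' hx0).2 hx).symm.eq_bot
  have hsum := finrank_sup_add_finrank_inf_eq (K ∙ x) (span K s)
  rw [hdisj, finrank_bot, add_zero, finrank_span_singleton hx0] at hsum
  rw [span_insert, hsum, add_comm]

variable [LinearOrder ι]

open Classical in
theorem finrank_span_add_card_mem_span_later (v : ι → V) (s : Finset ι) :
    finrank K (span K (v '' s)) + #{i ∈ s | v i ∈ span K (v '' {j | j ∈ s ∧ i < j})} = #s := by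
  induction s using Finset.induction_on_min with
  | empty => rw [coe_empty, Set.image_empty, span_empty, finrank_bot]; simp
  | insert a s has ih =>
    have ha : a ∉ s := fun h => lt_irrefl a (has a h)
    have hfirst : {j | j ∈ insert a s ∧ a < j} = (s : Set ι) := by
      ext j
      simp only [Set.mem_ofPred_eq, mem_insert, mem_coe]
      refine ⟨fun ⟨hj, haj⟩ => hj.resolve_left (haj.ne' ·), fun hj => ⟨Or.inr hj, has j hj⟩⟩
    have hrest : {i ∈ s | v i ∈ span K (v '' {j | j ∈ insert a s ∧ i < j})} =
        {i ∈ s | v i ∈ span K (v '' {j | j ∈ s ∧ i < j})} := by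
      refine filter_congr fun i hi => ?_
      suffices {j | j ∈ insert a s ∧ i < j} = {j | j ∈ s ∧ i < j} by rw [this]
      ext j
      simp only [Set.mem_ofPred_eq, mem_insert]
      refine ⟨fun ⟨hj, hij⟩ => ⟨hj.resolve_left ?_, hij⟩, fun ⟨hj, hij⟩ => ⟨Or.inr hj, hij⟩⟩
      rintro rfl
      exact lt_asymm hij (has i hi)
    rw [filter_insert, hfirst, hrest, coe_insert, Set.image_insert_eq, card_insert_of_notMem ha]
    by_cases hmem : v a ∈ span K (v '' s)
    · rw [if_pos hmem, card_insert_of_notMem fun h => ha (mem_filter.1 h).1,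
        span_insert_eq_span hmem]
      omega
    · rw [if_neg hmem, finrank_span_insert_of_notMem_span K (s.finite_toSet.image v) hmem]
      omega

variable [Fintype ι]

open Classical in
noncomputable def redundantIndices (v : ι → V) : Finset ι :=
  {i | v i ∈ span K (v '' Set.Ioi i)}

theorem mem_redundantIndices {v : ι → V} {i : ι} :
    i ∈ redundantIndices K v ↔ v i ∈ span K (v '' Set.Ioi i) := by
  simp [redundantIndices]

theorem finrank_span_range_add_card_redundantIndices (v : ι → V) :
    finrank K (span K (Set.range v)) + #(redundantIndices K v) = Fintype.card ι := by
  have h := finrank_span_add_card_mem_span_later K v univ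
  rw [coe_univ, Set.image_univ, card_univ] at h
  convert h using 3
  ext i
  simp [mem_redundantIndices, Set.Ioi_def]

theorem finrank_span_image_Ioi_add_card_redundantIndices_gt (v : ι → V) (t : ι) :
    finrank K (span K (v '' Set.Ioi t)) + #{i ∈ redundantIndices K v | t < i} =
      #{j | t < j} := by
  have h := finrank_span_add_card_mem_span_later K v {j | t < j}
  have hIoi : (({j | t < j} : Finset ι) : Set ι) = Set.Ioi t := by ext; simp
  rw [hIoi] at h
  convert h using 3
  ext i
  simp only [mem_filter, mem_univ, true_and, mem_redundantIndices]
  refine ⟨fun ⟨hi, ht⟩ => ⟨ht, ?_⟩, fun ⟨ht, hi⟩ => ⟨?_, ht⟩⟩ <;>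
  · convert hi using 4
    ext j
    simpa using fun hj => ht.trans hj

/-- Counted from `0`: `IsNthLastRedundant K v 0 t` says that `t` is the last redundant index. -/
def IsNthLastRedundant (v : ι → V) (γ : ℕ) (t : ι) : Prop :=
  t ∈ redundantIndices K v ∧ #{i ∈ redundantIndices K v | t < i} = γ

variable {K}

theorem exists_isNthLastRedundant {v : ι → V} {γ : ℕ} (h : γ < #(redundantIndices K v)) :
    ∃ t, IsNthLastRedundant K v γ t :=
  let ⟨t, ht, hγ⟩ := exists_card_filter_lt_eq h
  ⟨t, ht, hγ⟩

theorem IsNthLastRedundant.le_card_gt {v : ι → V} {γ : ℕ} {t : ι}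
    (h : IsNthLastRedundant K v γ t) : γ ≤ #{j | t < j} :=
  h.2 ▸ card_le_card (monotone_filter_left _ (subset_univ _))

theorem IsNthLastRedundant.finrank_span_image_Ioi {v : ι → V} {γ : ℕ} {t : ι}
    (h : IsNthLastRedundant K v γ t) :
    finrank K (span K (v '' Set.Ioi t)) = #{j | t < j} - γ :=
  h.2 ▸ Nat.eq_sub_of_add_eq (finrank_span_image_Ioi_add_card_redundantIndices_gt K v t)

end RedundantIndices

section SupportedMatrix

variable {R m ι : Type*} [Zero R] [DecidableEq m] [DecidableEq ι]

def supportedMatrix (S : Finset (m × ι)) (f : S → R) : Matrix m ι R :=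
  Matrix.of fun i j => if h : (i, j) ∈ S then f ⟨(i, j), h⟩ else 0

theorem supportedMatrix_col_congr {S : Finset (m × ι)} {f f' : S → R} {j : ι}
    (h : ∀ p : S, p.1.2 = j → f p = f' p) :
    (supportedMatrix S f).col j = (supportedMatrix S f').col j := by
  ext i
  simp only [Matrix.col_apply, supportedMatrix, Matrix.of_apply]
  split_ifs with hij
  exacts [h _ rfl, rfl]

theorem supportedMatrix_injective (S : Finset (m × ι)) :
    Function.Injective (supportedMatrix (R := R) S) := by
  rintro f f' h
  funext ⟨⟨i, j⟩, hij⟩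
  simpa [supportedMatrix, hij] using congrFun (congrFun h i) j

theorem card_subtype_snd_eq [Fintype m] (S : Finset (m × ι)) (j : ι) :
    Fintype.card {p : S // p.1.2 = j} = #{i | (i, j) ∈ S} := by
  rw [← Fintype.card_subtype]
  refine Fintype.card_congr
    { toFun := fun p => ⟨p.1.1.1, by simp [← p.2]⟩
      invFun := fun i => ⟨⟨(i.1, j), i.2⟩, rfl⟩
      left_inv := ?_
      right_inv := fun i => rfl }
  rintro ⟨⟨⟨i, j⟩, hij⟩, rfl⟩
  rfl

end SupportedMatrix

section RankTail

variable {K m ι : Type*} [Field K] [Fintype K] [DecidableEq m]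
  [Fintype ι] [LinearOrder ι]

open Classical in
theorem card_isNthLastRedundant_mul_le [Fintype m] (S : Finset (m × ι)) (t : ι) (γ : ℕ) :
    #{f : S → K | IsNthLastRedundant K (supportedMatrix S f).col γ t} *
        Fintype.card K ^ #{i | (i, t) ∈ S} ≤
      Fintype.card K ^ (#{j | t < j} - γ) * Fintype.card K ^ #S := by
  set q := Fintype.card K
  set A : Finset (S → K) := {f : S → K | IsNthLastRedundant K (supportedMatrix S f).col γ t}
  set offCol : (S → K) → ({p : S // p.1.2 ≠ t} → K) := fun f p => f p
  -- Fixing `f` off column `t` fixes the columns right of `t`; column `t` then determines `f`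
  -- and has to lie in their span.
  have hfiber : ∀ b ∈ A.image offCol, #{f ∈ A | offCol f = b} ≤ q ^ (#{j | t < j} - γ) := by
    intro b hb
    obtain ⟨f₀, hf₀, rfl⟩ := mem_image.1 hb
    set U := span K ((supportedMatrix S f₀).col '' Set.Ioi t)
    have hcol : ∀ f ∈ ({f ∈ A | offCol f = offCol f₀} : Finset _), ∀ j ≠ t,
        (supportedMatrix S f).col j = (supportedMatrix S f₀).col j := fun f hf j hj =>
      supportedMatrix_col_congr fun p hp => congrFun (mem_filter.1 hf).2 ⟨p, hp ▸ hj⟩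
    calc #{f ∈ A | offCol f = offCol f₀}
        ≤ #{x : m → K | x ∈ U} := by
          refine card_le_card_of_injOn (fun f => (supportedMatrix S f).col t) (fun f hf => ?_) ?_
          · have hred := (mem_redundantIndices K).1 (mem_filter.1 (mem_filter.1 hf).1).2.1
            have himg : (supportedMatrix S f).col '' Set.Ioi t =
                (supportedMatrix S f₀).col '' Set.Ioi t :=
              Set.image_congr fun j hj => hcol f hf j (ne_of_gt hj)
            rw [himg] at hred
            exact mem_filter.2 ⟨mem_univ _, hred⟩
          · intro f hf f' hf' hff'
            refine supportedMatrix_injective S (Matrix.ext fun i j => ?_)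
            by_cases hj : j = t
            · subst hj
              exact congrFun hff' i
            · exact congrFun ((hcol f hf j hj).trans (hcol f' hf' j hj).symm) i
      _ = q ^ (#{j | t < j} - γ) := by
          rw [← Fintype.card_subtype, ← (mem_filter.1 hf₀).2.finrank_span_image_Ioi]
          exact card_eq_pow_finrank
  have hc : #{i | (i, t) ∈ S} ≤ #S := by
    rw [← card_subtype_snd_eq, ← Fintype.card_coe S]
    exact Fintype.card_subtype_le _
  calc #A * q ^ #{i | (i, t) ∈ S}
      ≤ q ^ (#{j | t < j} - γ) * #(A.image offCol) * q ^ #{i | (i, t) ∈ S} := by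
        gcongr
        exact card_le_mul_card_image A _ hfiber
    _ ≤ q ^ (#{j | t < j} - γ) * q ^ (#S - #{i | (i, t) ∈ S}) * q ^ #{i | (i, t) ∈ S} := by
        gcongr
        refine (card_le_univ _).trans_eq ?_
        rw [Fintype.card_fun, Fintype.card_subtype_compl, card_subtype_snd_eq, Fintype.card_coe]
    _ = q ^ (#{j | t < j} - γ) * q ^ #S := by
        rw [mul_assoc, ← pow_add, Nat.sub_add_cancel hc]

open Classical in
theorem card_rank_add_lt_le_sum (S : Finset (m × ι)) (γ : ℕ) :
    #{f : S → K | (supportedMatrix S f).rank + γ < Fintype.card ι} ≤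
      ∑ t with γ ≤ #{j | t < j},
        #{f : S → K | IsNthLastRedundant K (supportedMatrix S f).col γ t} := by
  refine (card_le_card fun f hf => ?_).trans card_biUnion_le
  have hrank := finrank_span_range_add_card_redundantIndices K (supportedMatrix S f).col
  rw [← Matrix.rank_eq_finrank_span_cols] at hrank
  obtain ⟨t, ht⟩ := exists_isNthLastRedundant (K := K) (v := (supportedMatrix S f).col) (γ := γ)
    (by have := (mem_filter.1 hf).2; omega)
  simp only [mem_biUnion, mem_filter, mem_univ, true_and]
  exact ⟨t, ht.le_card_gt, ht⟩

theorem card_rank_add_lt_div_le [Fintype m] (S : Finset (m × ι)) (γ : ℕ) :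
    (#{f : S → K | (supportedMatrix S f).rank + γ < Fintype.card ι} : ℝ) / Fintype.card K ^ #S ≤
      ∑ t with γ ≤ #{j | t < j},
        (Fintype.card K : ℝ) ^ (#{j | t < j} - γ) / Fintype.card K ^ #{i | (i, t) ∈ S} := by
  classical
  calc (#{f : S → K | (supportedMatrix S f).rank + γ < Fintype.card ι} : ℝ) / Fintype.card K ^ #S
      ≤ (∑ t with γ ≤ #{j | t < j},
          #{f : S → K | IsNthLastRedundant K (supportedMatrix S f).col γ t} : ℕ) /
          Fintype.card K ^ #S := by
        gcongr
        exact_mod_cast card_rank_add_lt_le_sum S γ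
    _ = ∑ t with γ ≤ #{j | t < j},
          (#{f : S → K | IsNthLastRedundant K (supportedMatrix S f).col γ t} : ℝ) /
          Fintype.card K ^ #S := by
        rw [Nat.cast_sum, sum_div]
    _ ≤ _ := by
        refine sum_le_sum fun t _ => ?_
        rw [div_le_div_iff₀ (by positivity) (by positivity)]
        exact_mod_cast card_isNthLastRedundant_mul_le (K := K) S t γ

end RankTail

section BlockLowerTriangular

variable {K : Type*} [Field K] [Fintype K] {w r : ℕ} {S : Finset (Fin (w * r) × Fin (w * r))}

theorem card_col_of_blockLowerTriangular
    (hS : ∀ p : Fin (w * r) × Fin (w * r), p ∈ S ↔ p.2.val / r ≤ p.1.val / r) (t : Fin (w * r)) :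
    #{i | (i, t) ∈ S} = w * r - r * (t / r) := by
  have hr : 0 < r := Nat.pos_of_mul_pos_left t.pos
  have hlt : r * (t / r) < w * r := (Nat.mul_div_le t r).trans_lt t.isLt
  have hcol : ({i | (i, t) ∈ S} : Finset (Fin (w * r))) = Ici ⟨r * (t / r), hlt⟩ := by
    ext i
    simp [hS, Fin.le_def, Nat.le_div_iff_mul_le hr, mul_comm]
  rw [hcol, Fin.card_Ici]

theorem card_rank_lt_div_le_of_blockLowerTriangular
    (hS : ∀ p : Fin (w * r) × Fin (w * r), p ∈ S ↔ p.2.val / r ≤ p.1.val / r) (γ : ℕ) :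
    (#{f : S → K | (supportedMatrix S f).rank < w * r - γ} : ℝ) / Fintype.card K ^ #S ≤
      ∑ t ∈ range (w * r - γ), (Fintype.card K : ℝ)⁻¹ ^ (γ + t % r + 1) := by
  have hterm (t : Fin (w * r)) (ht : γ ≤ #{j | t < j}) :
      (Fintype.card K : ℝ) ^ (#{j | t < j} - γ) / Fintype.card K ^ #{i | (i, t) ∈ S} =
        (Fintype.card K : ℝ)⁻¹ ^ (γ + t % r + 1) := by
    rw [filter_lt_eq_Ioi, Fin.card_Ioi] at ht ⊢
    have hexp : w * r - r * (t / r) = (w * r - 1 - t - γ) + (γ + t % r + 1) := by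
      have := Nat.mod_add_div t r
      omega
    rw [card_col_of_blockLowerTriangular hS, hexp, pow_add, div_mul_cancel_left₀ (by positivity),
      inv_pow]
  calc (#{f : S → K | (supportedMatrix S f).rank < w * r - γ} : ℝ) / Fintype.card K ^ #S
      ≤ ∑ t with γ ≤ #{j | t < j},
          (Fintype.card K : ℝ) ^ (#{j | t < j} - γ) / Fintype.card K ^ #{i | (i, t) ∈ S} := by
        convert card_rank_add_lt_div_le S γ using 5
        rw [Fintype.card_fin]
        omega
    _ = ∑ t ∈ ({t | γ ≤ #{j | t < j}} : Finset (Fin (w * r))).map Fin.valEmbedding,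
          (Fintype.card K : ℝ)⁻¹ ^ (γ + t % r + 1) := by
        rw [sum_map]
        exact sum_congr rfl fun t ht => hterm t (mem_filter.1 ht).2
    _ ≤ _ := by
        refine sum_le_sum_of_subset_of_nonneg (fun u hu => ?_) fun _ _ _ => by positivity
        obtain ⟨t, ht, rfl⟩ := mem_map.1 hu
        rw [mem_filter, filter_lt_eq_Ioi, Fin.card_Ioi] at ht
        simp only [Fin.valEmbedding_apply, mem_range]
        omega

end BlockLowerTriangular

theorem sum_range_mod_le {M : Type*} [AddCommMonoid M] [PartialOrder M] [IsOrderedAddMonoid M]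
    (f : ℕ → M) (hf : ∀ i, 0 ≤ f i) {r : ℕ} (hr : 0 < r) (L : ℕ) :
    ∑ t ∈ range L, f (t % r) ≤ ((L + r - 1) / r) • ∑ t ∈ range r, f t := by
  have hperiod (k : ℕ) : ∑ t ∈ range (r * k), f (t % r) = k • ∑ t ∈ range r, f t := by
    induction k with
    | zero => simp
    | succ k ih =>
      rw [mul_add_one, sum_range_add, ih, succ_nsmul]
      congr 1
      exact sum_congr rfl fun t ht => by rw [Nat.mul_add_mod, Nat.mod_eq_of_lt (mem_range.1 ht)]
  rw [← hperiod]
  refine sum_le_sum_of_subset_of_nonneg (range_subset_range.2 ?_) fun _ _ _ => hf _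
  have := Nat.div_add_mod (L + r - 1) r
  have := Nat.mod_lt (L + r - 1) hr
  omega

theorem sum_range_inv_two_pow_succ (r : ℕ) : ∑ t ∈ range r, (2⁻¹ : ℝ) ^ (t + 1) = 1 - 2⁻¹ ^ r := by
  induction r with
  | zero => simp
  | succ r ih =>
    rw [sum_range_succ, ih]
    ring

theorem toReal_measure_preimage_of_map_eq_uniform {Ω α : Type*} [MeasurableSpace Ω]
    [MeasurableSpace α] [MeasurableSingletonClass α] [Fintype α] [Nonempty α] {μ : Measure Ω}
    {X : Ω → α} (hX : μ.map X = (PMF.uniformOfFintype α).toMeasure) (s : Set α)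
    [DecidablePred (· ∈ s)] :
    (μ (X ⁻¹' s)).toReal = #{a | a ∈ s} / Fintype.card α := by
  have hXm : AEMeasurable X μ := aemeasurable_of_map_neZero (by rw [hX]; infer_instance)
  rw [← Measure.map_apply_of_aemeasurable hXm s.toFinite.measurableSet, hX,
    PMF.toMeasure_uniformOfFintype_apply _ s.toFinite.measurableSet, ENNReal.toReal_div]
  simp [Fintype.card_subtype]

theorem rank_lower_tail_block_triangular_general {Ω : Type} [MeasurableSpace Ω]
    (μ : Measure Ω)
    (w r : ℕ)
    (T : Ω → Fin (w * r) → Fin (w * r) → ZMod 2)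
    (S : Finset (Fin (w * r) × Fin (w * r)))
    (hS : ∀ p : Fin (w * r) × Fin (w * r), p ∈ S ↔ p.2.val / r ≤ p.1.val / r)
    (hunif : μ.map (fun ω (p : S) => T ω p.1.1 p.1.2)
      = (PMF.uniformOfFintype (S → ZMod 2)).toMeasure)
    (hzero : ∀ ω i j, (i, j) ∉ S → T ω i j = 0)
    (γ : ℕ) :
    (μ {ω | (Matrix.of (T ω)).rank < w * r - γ}).toReal
      ≤ (((w * r - γ + r - 1) / r : ℕ) : ℝ) * (1 - 2 ^ (-(r : ℤ))) * 2 ^ (-(γ : ℤ)) := by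
  rcases Nat.eq_zero_or_pos r with rfl | hr
  · simp
  have hT (ω : Ω) : Matrix.of (T ω) = supportedMatrix S fun p => T ω p.1.1 p.1.2 := by
    ext i j
    by_cases h : (i, j) ∈ S <;> simp [supportedMatrix, h, hzero]
  have hprob := toReal_measure_preimage_of_map_eq_uniform hunif
    {f | (supportedMatrix S f).rank < w * r - γ}
  simp only [Set.preimage_ofPred_eq, ← hT, Fintype.card_fun, ZMod.card, Fintype.card_coe] at hprob
  rw [hprob]
  calc _ ≤ ∑ t ∈ range (w * r - γ), ((2 : ℕ) : ℝ)⁻¹ ^ (γ + t % r + 1) := by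
        simpa using card_rank_lt_div_le_of_blockLowerTriangular (K := ZMod 2) hS γ
    _ = 2⁻¹ ^ γ * ∑ t ∈ range (w * r - γ), (2⁻¹ : ℝ) ^ (t % r + 1) := by
        rw [mul_sum]
        exact sum_congr rfl fun t _ => by push_cast; ring
    _ ≤ 2⁻¹ ^ γ * (((w * r - γ + r - 1) / r : ℕ) * (1 - 2⁻¹ ^ r)) := by
        gcongr
        rw [← sum_range_inv_two_pow_succ, ← nsmul_eq_mul]
        exact sum_range_mod_le (fun t => (2⁻¹ : ℝ) ^ (t + 1)) (fun _ => by positivity) hr _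
    _ = _ := by
        simp only [zpow_neg, zpow_natCast, inv_pow]
        ring

/-- Lemma SquareT: T is an n×n block lower-triangular matrix over F₂
(n = wr, blocks of size r×r); the block of entry (i,j) is (i/r, j/r). Blocks on or
below the block diagonal (j/r ≤ i/r) are jointly i.i.d. uniform; blocks strictly
above are zero. Then for 0 ≤ γ ≤ n−1,
Pr[rank(T) < n−γ] ≤ ⌈(n−γ)/r⌉·(1−2^{−r})·2^{−γ}, where ⌈a/r⌉ = (a+r−1)/r. -/
theorem rank_lower_tail_block_triangular {Ω : Type} [MeasurableSpace Ω]
    (μ : Measure Ω) [IsProbabilityMeasure μ]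
    (w r : ℕ) (hw : 0 < w) (hr : 0 < r)
    (T : Ω → Fin (w * r) → Fin (w * r) → ZMod 2)
    (S : Finset (Fin (w * r) × Fin (w * r)))
    (hS : ∀ p : Fin (w * r) × Fin (w * r), p ∈ S ↔ p.2.val / r ≤ p.1.val / r)
    (hunif : μ.map (fun ω (p : S) => T ω p.1.1 p.1.2)
      = (PMF.uniformOfFintype (S → ZMod 2)).toMeasure)
    (hzero : ∀ ω i j, (i, j) ∉ S → T ω i j = 0)
    (γ : ℕ) (hγ : γ ≤ w * r - 1) :
    (μ {ω | (Matrix.of (T ω)).rank < w * r - γ}).toReal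
      ≤ (((w * r - γ + r - 1) / r : ℕ) : ℝ) * (1 - 2 ^ (-(r : ℤ))) * 2 ^ (-(γ : ℤ)) :=
  rank_lower_tail_block_triangular_general μ w r T S hS hunif hzero γ
end

section
/- Let r ≥ 1, u ≥ 1 be integers and n − γ ≤ ur with u = ⌈(n−γ)/r⌉. Then Σ_{j=1}^{n−γ} 2^{τ(j)·r − j} ≤ u·(1 − 2^{−r}), where τ(j) is the largest integer strictly smaller than j/r. -/
/-!
Cut `(0, u r]` into the blocks `(k r, (k + 1) r]`. For `j = k r + i` with `1 ≤ i ≤ r` we have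
`(j - 1) / r = k`, so the exponent is `-i` and each block contributes
`2⁻¹ + ⋯ + 2⁻ʳ = 1 - 2⁻ʳ`. Since `n - γ ≤ u r` and all terms are positive, the sum is at most
the sum over the `u` blocks.
-/

open Finset

noncomputable def blockWeight (r j : ℕ) : ℝ := (2 : ℝ) ^ (((((j - 1) / r) * r : ℕ) : ℤ) - (j : ℤ))

theorem sum_Ioc_two_zpow_neg (r : ℕ) :
    ∑ i ∈ Ioc 0 r, (2 : ℝ) ^ (-(i : ℤ)) = 1 - 2 ^ (-(r : ℤ)) := by
  induction r with
  | zero => simp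
  | succ r ih =>
    rw [sum_Ioc_succ_top (Nat.zero_le r), ih, Nat.cast_succ, neg_add,
      zpow_add₀ two_ne_zero (-(r : ℤ))]
    ring

theorem blockWeight_add (r k i : ℕ) (hi₀ : 0 < i) (hir : i ≤ r) :
    blockWeight r (k * r + i) = (2 : ℝ) ^ (-(i : ℤ)) := by
  have hdiv : (k * r + i - 1) / r = k := by
    rw [Nat.add_sub_assoc hi₀, mul_comm, Nat.mul_add_div (by omega),
      Nat.div_eq_of_lt (by omega), add_zero]
  rw [blockWeight, hdiv]
  push_cast
  ring_nf

theorem sum_blockWeight_block (r k : ℕ) :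
    ∑ j ∈ Ioc (k * r) ((k + 1) * r), blockWeight r j = 1 - 2 ^ (-(r : ℤ)) := by
  have hblock : Ioc (k * r) ((k + 1) * r) = (Ioc 0 r).map (addLeftEmbedding (k * r)) := by
    rw [map_add_left_Ioc, add_zero, add_one_mul]
  rw [← sum_Ioc_two_zpow_neg r, hblock, sum_map]
  refine sum_congr rfl fun i hi ↦ ?_
  rw [mem_Ioc] at hi
  exact blockWeight_add r k i hi.1 hi.2

theorem sum_blockWeight_Ioc_mul (r u : ℕ) :
    ∑ j ∈ Ioc 0 (u * r), blockWeight r j = u * (1 - 2 ^ (-(r : ℤ))) := by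
  induction u with
  | zero => simp
  | succ u ih =>
    rw [← sum_Ioc_consecutive _ (Nat.zero_le _) (Nat.mul_le_mul_right r u.le_succ), ih,
      sum_blockWeight_block, Nat.cast_succ]
    ring

theorem sum_two_pow_block_bound_general (r n γ u : ℕ) (hur : n - γ ≤ u * r) :
    ∑ j ∈ Finset.Icc 1 (n - γ),
        (2 : ℝ) ^ (((((j - 1) / r) * r : ℕ) : ℤ) - (j : ℤ))
      ≤ (u : ℝ) * (1 - 2 ^ (-(r : ℤ))) := by
  rw [← sum_blockWeight_Ioc_mul r u, ← Icc_add_one_left_eq_Ioc]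
  exact sum_le_sum_of_subset_of_nonneg (Icc_subset_Icc_right hur)
    fun j _ _ ↦ by positivity

/-- Key summation estimate from the proof of Lemma SquareT.
For r ≥ 1, u = ⌈(n−γ)/r⌉ (so n − γ ≤ u·r), and τ(j) = (j−1)/r (the largest integer
strictly smaller than j/r for j ≥ 1):
Σ_{j=1}^{n−γ} 2^{τ(j)·r − j} ≤ u·(1 − 2^{−r}). -/
theorem sum_two_pow_block_bound (r n γ u : ℕ) (hr : 1 ≤ r) (hγn : γ ≤ n)
    (hu : u = (n - γ + r - 1) / r) (hur : n - γ ≤ u * r) :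
    ∑ j ∈ Finset.Icc 1 (n - γ),
        (2 : ℝ) ^ (((((j - 1) / r) * r : ℕ) : ℤ) - (j : ℤ))
      ≤ (u : ℝ) * (1 - 2 ^ (-(r : ℤ))) :=
  sum_two_pow_block_bound_general r n γ u hur
end
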